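/- For every molecular tree G, among the molecular trees obtained from G by a permutation of vertices whose root (vertex 1) is central in G, there exists exactly one ≺-largest element (the canonical molecular tree of G). -/

import Mathlib

/-! ### Ordered rooted labelled trees and the order `≺` -/

/-- An ordered rooted tree with an element label and an incoming bond label at each
node; this represents `subtree(G,v)` of a molecular tree `G`. -/
inductive RTree (E : Type) : Type where
  | node : E → ℕ → List (RTree E) → RTree E

namespace RTree

variable {E : Type}

/-- The element label `ℓ(v)` of the root node. -/
def elemLabel : RTree E → E
  | node l _ _ => l

/-- The incoming bond label `in(G,v)`. -/
def inBond : RTree E → ℕ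
  | node _ i _ => i

/-- `childtrees(G,v)`: the ordered list of subtrees of the children of the root. -/
def children : RTree E → List (RTree E)
  | node _ _ c => c

/-- The number of vertices `s` of the subtree. -/
def size : RTree E → ℕ
  | node _ _ c => 1 + (c.attach.map (fun x => size x.1)).sum
decreasing_by
  have := List.sizeOf_lt_of_mem x.2
  simp only [node.sizeOf_spec]
  omega

/-- The depth `d` of the subtree. -/
def depth : RTree E → ℕ
  | node _ _ c => 1 + (c.attach.map (fun x => depth x.1)).foldr max 0
decreasing_by
  have := List.sizeOf_lt_of_mem x.2
  simp only [node.sizeOf_spec]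
  omega

/-- The tuple `R(G,v) = (d, s, c, ℓ(v), in(G,v))`. -/
def R (t : RTree E) : ℕ × ℕ × ℕ × E × ℕ :=
  (t.depth, t.size, t.children.length, t.elemLabel, t.inBond)

/-- The lexicographic extension `⊏` of the fixed strict total order on `𝔼` (given by a
`LinearOrder` on `E`) and the usual `<` on `ℕ` to 5-tuples of the form `R(G,v)`. -/
def Rlt [LinearOrder E] (a b : ℕ × ℕ × ℕ × E × ℕ) : Prop :=
  a.1 < b.1 ∨ (a.1 = b.1 ∧
    (a.2.1 < b.2.1 ∨ (a.2.1 = b.2.1 ∧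
      (a.2.2.1 < b.2.2.1 ∨ (a.2.2.1 = b.2.2.1 ∧
        (a.2.2.2.1 < b.2.2.2.1 ∨ (a.2.2.2.1 = b.2.2.2.1 ∧
          a.2.2.2.2 < b.2.2.2.2)))))))

mutual
  /-- The order `≺` on subtrees (Definition 3 of the paper): the smallest relation
  such that `S₁ ≺ S₂` whenever (1) `R(G₁,v₁) ⊏ R(G₂,v₂)`, or (2) `R(G₁,v₁) = R(G₂,v₂)`
  and `childtrees(G₁,v₁) ≺ childtrees(G₂,v₂)` lexicographically. -/
  inductive Prec [LinearOrder E] : RTree E → RTree E → Prop where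
    | base {t₁ t₂ : RTree E} : Rlt (R t₁) (R t₂) → Prec t₁ t₂
    | ofChildren {t₁ t₂ : RTree E} :
        R t₁ = R t₂ → PrecList t₁.children t₂.children → Prec t₁ t₂

  /-- The lexicographic extension of `≺` to tuples of subtrees. -/
  inductive PrecList [LinearOrder E] : List (RTree E) → List (RTree E) → Prop where
    | head {a b : RTree E} {l₁ l₂ : List (RTree E)} :
        Prec a b → PrecList (a :: l₁) (b :: l₂)
    | tail {a : RTree E} {l₁ l₂ : List (RTree E)} :
        PrecList l₁ l₂ → PrecList (a :: l₁) (a :: l₂)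
end

end RTree

/-! ### Molecular graphs and molecular trees -/

/-- A molecular graph `G = (V, E, ℓ, b)`: vertices are `Fin k` (representing
`{1, …, k}`, `k ≥ 1`, with vertex `1` corresponding to the index `0`); the undirected
edges are the unordered pairs `e` with `bond e > 0` (no self-loops), labelled by
`bond`; `ℓ` is given by `label`. -/
structure MolGraph (El : Type) where
  k : ℕ
  k_pos : 0 < k
  bond : Sym2 (Fin k) → ℕ
  bond_irrefl : ∀ v : Fin k, bond s(v, v) = 0
  label : Fin k → El

namespace MolGraph

variable {El : Type}

/-- The underlying simple graph of a molecular graph. -/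
def toSimple (G : MolGraph El) : SimpleGraph (Fin G.k) where
  Adj u v := u ≠ v ∧ 0 < G.bond s(u, v)
  symm := by
    constructor
    intro u v h
    exact ⟨h.1.symm, by rw [Sym2.eq_swap]; exact h.2⟩
  loopless := ⟨fun v h => h.1 rfl⟩

instance (G : MolGraph El) : DecidableRel G.toSimple.Adj :=
  fun u v => inferInstanceAs (Decidable (u ≠ v ∧ 0 < G.bond s(u, v)))

/-- The root: vertex `1` of the molecular graph. -/
def root (G : MolGraph El) : Fin G.k := ⟨0, G.k_pos⟩

/-- `Descend G v u` states that `u` belongs to the subtree rooted at `v`: every walk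
from the root to `u` passes through `v`. -/
def Descend (G : MolGraph El) (v u : Fin G.k) : Prop :=
  ∀ p : G.toSimple.Walk G.root u, v ∈ p.support

/-- `G` is a molecular tree: it is connected and free of cycles, and the natural
order of the vertices `1, …, k` corresponds to a depth-first search of the tree
rooted at vertex `1`.  The latter is characterized by preorder numbering: every
vertex is the minimum of its subtree, and each subtree is an interval of vertices. -/
def IsMolTree (G : MolGraph El) : Prop :=
  G.toSimple.IsTree ∧
  (∀ v u : Fin G.k, G.Descend v u → v ≤ u) ∧
  (∀ v u w : Fin G.k, G.Descend v u → v ≤ w → w ≤ u → G.Descend v w)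

/-- The ordered children of `v` in a DFS-numbered molecular tree: the neighbours of
`v` that are larger than `v`, in increasing order. -/
def childrenList (G : MolGraph El) (v : Fin G.k) : List (Fin G.k) :=
  (Finset.univ.filter (fun w => G.toSimple.Adj v w ∧ v < w)).sort (· ≤ ·)

/-- The incoming bond label `in(G,v)`: the bond to the parent (the unique smaller
neighbour in a DFS-numbered molecular tree), and `0` for the root. -/
def inBondNat (G : MolGraph El) (v : Fin G.k) : ℕ :=
  ∑ w ∈ Finset.univ.filter (fun w => G.toSimple.Adj v w ∧ w < v), G.bond s(v, w)

/-- `subtree(G,v)` of a DFS-numbered molecular tree, as an ordered rooted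
labelled tree. -/
def toRTree (G : MolGraph El) (v : Fin G.k) : RTree El :=
  RTree.node (G.label v) (G.inBondNat v)
    ((G.childrenList v).attach.map (fun w => G.toRTree w.1))
termination_by G.k - v.val
decreasing_by
  have hw : w.1 ∈ G.childrenList v := w.2
  simp only [childrenList, Finset.mem_sort, Finset.mem_filter] at hw
  have h1 : (v : ℕ) < (w.1 : ℕ) := hw.2.2
  have h2 : (w.1 : ℕ) < G.k := w.1.isLt
  omega

/-- The order `≺` on molecular trees: `G₁ ≺ G₂` iff `subtree(G₁,1) ≺ subtree(G₂,1)`. -/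
def PrecT [LinearOrder El] (G₁ G₂ : MolGraph El) : Prop :=
  RTree.Prec (G₁.toRTree G₁.root) (G₂.toRTree G₂.root)

/-- The molecular graph obtained from `G` by the vertex permutation `σ`: vertex `v`
of the new graph corresponds to vertex `σ v` of `G`. -/
def permute (G : MolGraph El) (σ : Equiv.Perm (Fin G.k)) : MolGraph El where
  k := G.k
  k_pos := G.k_pos
  bond := fun e => G.bond (e.map σ)
  bond_irrefl := by
    intro v
    show G.bond (Sym2.map σ s(v, v)) = 0
    rw [Sym2.map_pair_eq]
    exact G.bond_irrefl (σ v)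
  label := fun v => G.label (σ v)

end MolGraph

/-! ### Central vertices -/

/-- A longest simple path: a path of maximum length (number of vertices) among all
simple paths of the graph. -/
def IsLongestPath {V : Type} (G : SimpleGraph V) {a b : V} (p : G.Walk a b) : Prop :=
  p.IsPath ∧ ∀ (x y : V) (q : G.Walk x y), q.IsPath → q.support.length ≤ p.support.length

/-- The central vertices of a simple path `v_1, …, v_n` (1-indexed) are the `v_i` with
`i ∈ {⌈(n+1)/2⌉, ⌊(n+1)/2⌋}`; in `ℕ`, `⌈(n+1)/2⌉ = (n+2)/2` and `⌊(n+1)/2⌋ = (n+1)/2`. -/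
def centralInPath {V : Type} {G : SimpleGraph V} {a b : V} (p : G.Walk a b) (v : V) : Prop :=
  ∃ i : ℕ,
    (i = (p.support.length + 2) / 2 ∨ i = (p.support.length + 1) / 2) ∧
    ∃ h : i - 1 < p.support.length, p.support.get ⟨i - 1, h⟩ = v

/-- A vertex is central in a tree if it is central in some longest simple path. -/
def IsCentral {V : Type} (G : SimpleGraph V) (v : V) : Prop :=
  ∃ (a b : V) (p : G.Walk a b), IsLongestPath G p ∧ centralInPath p v

open MolGraph

/-!
`≺` is a strict total order on rooted trees (being lexicographic, by structural induction),
and a strict order that is total on a finite nonempty set has a unique greatest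
element there. The candidates are finitely many, being relabellings of `G`, and there is one:
a longest path has a central vertex `c`, and numbering the vertices by the lexicographic order
of their paths from `c` is a depth-first numbering rooted at `c`. Finally `≺` is total on the
candidates because a depth-first numbered molecular tree is determined by `subtree(G, 1)`:
since every subtree occupies an interval of consecutive vertices, the preorder serialization of
the rooted tree, recording at each node its label, its incoming bond and the position of its
parent, lists exactly these data for the vertices `1, …, k` in order.
-/

theorem Set.Finite.existsUnique_greatest_of_total {α : Type*} {s : Set α} (hs : s.Finite)
    (hne : s.Nonempty) {r : α → α → Prop} (hirr : ∀ a, ¬ r a a)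
    (htrans : ∀ {a b c}, r a b → r b c → r a c)
    (htotal : ∀ a ∈ s, ∀ b ∈ s, a ≠ b → r a b ∨ r b a) :
    ∃! m, m ∈ s ∧ ∀ a ∈ s, a ≠ m → r a m := by
  have : Finite s := hs
  let r' : s → s → Prop := fun a b => r b a
  have : IsTrans s r' := ⟨fun _ _ _ h₁ h₂ => htrans h₂ h₁⟩
  have : Std.Irrefl r' := ⟨fun a => hirr a⟩
  obtain ⟨⟨m, hm⟩, -, hmax⟩ :=
    (Finite.wellFounded_of_trans_of_irrefl r').has_min Set.univ ⟨⟨_, hne.some_mem⟩, trivial⟩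
  refine ⟨m, ⟨hm, fun a ha hane => ?_⟩, fun m' ⟨hm', hmax'⟩ => ?_⟩
  · exact (htotal a ha m hm hane).resolve_right (hmax ⟨a, ha⟩ trivial)
  · by_contra hne'
    exact hmax ⟨m', hm'⟩ trivial (hmax' m hm (Ne.symm hne'))

theorem List.IsPrefix.of_le_of_le {α : Type*} [LinearOrder α] {p y z : List α} (h : p <+: z)
    (hpy : p ≤ y) (hyz : y ≤ z) : p <+: y := by
  induction p generalizing y z with
  | nil => exact List.nil_prefix
  | cons a p ih =>
    obtain ⟨t, rfl⟩ := h
    obtain hpy | rfl := hpy.lt_or_eq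
    swap; · exact List.prefix_refl _
    obtain hyz | rfl := hyz.lt_or_eq
    swap; · exact ⟨t, rfl⟩
    cases y with
    | nil => exact absurd hpy (List.not_lt_nil _)
    | cons b y =>
      rw [List.cons_append, List.cons_lt_cons_iff] at hyz
      rw [List.cons_lt_cons_iff] at hpy
      have hba : b ≤ a := hyz.elim le_of_lt fun h => h.1.le
      obtain ⟨rfl, hp⟩ := hpy.resolve_left hba.not_gt
      obtain ⟨-, hy⟩ := hyz.resolve_left (lt_irrefl _)
      exact List.cons_prefix_cons.mpr ⟨rfl, ih ⟨t, rfl⟩ hp.le hy.le⟩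

theorem exists_equiv_fin_strictMono_comp {V β : Type*} [Fintype V] [LinearOrder β] {f : V → β}
    (hf : Function.Injective f) {n : ℕ} (hn : Fintype.card V = n) :
    ∃ e : Fin n ≃ V, StrictMono (f ∘ e) := by
  let _ : LinearOrder V := LinearOrder.lift' f hf
  exact ⟨(Fintype.orderIsoFinOfCardEq V hn).toEquiv, (Fintype.orderIsoFinOfCardEq V hn).strictMono⟩

theorem Fin.map_val_sort_Icc {n : ℕ} (a b : Fin n) :
    ((Finset.Icc a b).sort (· ≤ ·)).map Fin.val = List.range' a (b + 1 - a) := by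
  have h := Finset.map_sort Fin.valEmbedding (Finset.Icc a b) (· ≤ ·) (· ≤ ·)
    fun _ _ _ _ => Iff.rfl
  rw [Fin.map_valEmbedding_Icc, ← Finset.Ico_add_one_right_eq_Icc (a := (a : ℕ)),
    Nat.Ico_eq_range'] at h
  rw [show List.map Fin.val _ = _ from h]
  exact List.mergeSort_eq_self _ List.pairwise_le_range'

namespace SimpleGraph.IsTree

variable {V : Type*} {T : SimpleGraph V} (hT : T.IsTree)

noncomputable def path (u v : V) : T.Walk u v :=
  (hT.existsUnique_path u v).choose

theorem isPath_path (u v : V) : (hT.path u v).IsPath :=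
  (hT.existsUnique_path u v).choose_spec.1

theorem eq_path {u v : V} {p : T.Walk u v} (hp : p.IsPath) : p = hT.path u v :=
  (hT.existsUnique_path u v).choose_spec.2 p hp

/-- In the tree rooted at `r`, `w` is an ancestor of `v` iff `hT.key r w` is a prefix of
`hT.key r v`. -/
noncomputable def key (r v : V) : List V :=
  (hT.path r v).support

theorem getLast?_key (r v : V) : (hT.key r v).getLast? = some v := by
  rw [key, List.getLast?_eq_some_getLast (Walk.support_ne_nil _), Walk.getLast_support]

theorem nodup_key (r v : V) : (hT.key r v).Nodup :=
  (hT.isPath_path r v).support_nodup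

theorem key_injective (r : V) : Function.Injective (hT.key r) := fun v u h => by
  simpa [getLast?_key] using congrArg List.getLast? h

theorem mem_key_iff_prefix {r v w : V} : w ∈ hT.key r v ↔ hT.key r w <+: hT.key r v := by
  classical
  refine ⟨fun h => ?_, fun h => h.subset (Walk.end_mem_support _)⟩
  have htake : (hT.path r v).takeUntil w h = hT.path r w :=
    hT.eq_path ((hT.isPath_path r v).takeUntil h)
  refine ⟨((hT.path r v).dropUntil w h).support.tail, ?_⟩
  rw [key, key, ← htake, ← Walk.support_append]
  exact congrArg Walk.support (Walk.take_spec _ h)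

theorem key_root_prefix (r v : V) : hT.key r r <+: hT.key r v :=
  hT.mem_key_iff_prefix.mp (Walk.start_mem_support _)

theorem forall_walk_mem_support_iff_prefix {r v w : V} :
    (∀ p : T.Walk r v, w ∈ p.support) ↔ hT.key r w <+: hT.key r v := by
  classical
  rw [← mem_key_iff_prefix]
  refine ⟨fun h => h _, fun h p => p.support_bypass_subset_support ?_⟩
  rwa [hT.eq_path p.bypass_isPath]

theorem key_of_adj_of_not_mem {r v c : V} (hadj : T.Adj v c) (hc : c ∉ hT.key r v) :
    hT.key r c = hT.key r v ++ [c] := by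
  have hp : ((hT.path r v).concat hadj).IsPath :=
    (hT.isPath_path r v).concat hc hadj
  rw [key, ← hT.eq_path hp, Walk.support_concat]
  rfl

theorem key_of_adj_of_prefix {r v c : V} (hadj : T.Adj v c)
    (h : hT.key r v <+: hT.key r c) : hT.key r c = hT.key r v ++ [c] := by
  refine hT.key_of_adj_of_not_mem hadj fun hc => hadj.ne' (hT.key_injective r ?_)
  have h' := hT.mem_key_iff_prefix.mp hc
  exact h'.eq_of_length (h'.length_le.antisymm h.length_le)

theorem key_eq_key_penultimate_append {r v : V} (hv : v ≠ r) :
    hT.key r v = hT.key r (hT.path r v).penultimate ++ [v] := by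
  have hnil : ¬ (hT.path r v).Nil := Walk.not_nil_of_ne hv.symm
  refine hT.key_of_adj_of_prefix (Walk.adj_penultimate hnil) (hT.mem_key_iff_prefix.mp ?_)
  exact List.dropLast_subset _ (Walk.penultimate_mem_dropLast_support hnil)

theorem exists_adj_prefix_of_prefix {r v u : V} (h : hT.key r v <+: hT.key r u) (hne : v ≠ u) :
    ∃ x, T.Adj v x ∧ hT.key r x = hT.key r v ++ [x] ∧ hT.key r x <+: hT.key r u := by
  obtain ⟨t, ht⟩ := h
  have htne : t ≠ [] := by
    rintro rfl
    exact hne (hT.key_injective r (by rw [← ht, List.append_nil]))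
  have hchain : List.IsChain T.Adj (hT.key r u) := Walk.isChain_adj_support _
  rw [← ht, List.isChain_append] at hchain
  have hadj : T.Adj v (t.head htne) :=
    hchain.2.2 v (hT.getLast?_key r v) _ (List.head?_eq_some_head htne)
  have hmem : t.head htne ∈ hT.key r u := ht ▸ List.mem_append_right _ (List.head_mem htne)
  refine ⟨t.head htne, hadj, hT.key_of_adj_of_not_mem hadj fun hx => ?_,
    hT.mem_key_iff_prefix.mp hmem⟩
  have hnd := hT.nodup_key r u
  rw [← ht, List.nodup_append] at hnd
  exact hnd.2.2 _ hx _ (List.head_mem htne) rfl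

end SimpleGraph.IsTree

namespace SimpleGraph

theorem exists_isLongestPath {V : Type} [Fintype V] [Nonempty V] (G : SimpleGraph V) :
    ∃ (a b : V) (p : G.Walk a b), IsLongestPath G p := by
  classical
  let P : ℕ → Prop := fun n => ∃ (a b : V) (p : G.Walk a b), p.IsPath ∧ p.support.length = n
  have hbound : ∀ n, P n → n ≤ Fintype.card V := by
    rintro n ⟨a, b, p, hp, rfl⟩
    exact hp.support_nodup.length_le_card
  have hP1 : P 1 := ⟨Classical.arbitrary V, _, Walk.nil, Walk.IsPath.nil, rfl⟩
  obtain ⟨a, b, p, hp, hlen⟩ : P (Nat.findGreatest P (Fintype.card V)) :=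
    Nat.findGreatest_spec (hbound 1 hP1) hP1
  refine ⟨a, b, p, hp, fun x y q hq => hlen ▸ ?_⟩
  exact Nat.le_findGreatest (hbound _ ⟨x, y, q, hq, rfl⟩) ⟨x, y, q, hq, rfl⟩

theorem exists_isCentral {V : Type} [Fintype V] [Nonempty V] (G : SimpleGraph V) :
    ∃ c, IsCentral G c := by
  obtain ⟨a, b, p, hp⟩ := G.exists_isLongestPath
  have hlen : 0 < p.support.length := List.length_pos_of_ne_nil p.support_ne_nil
  exact ⟨_, a, b, p, hp, _, Or.inr rfl, by omega, rfl⟩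

theorem Iso.forall_walk_mem_support_iff {V W : Type*} {G : SimpleGraph V} {H : SimpleGraph W}
    (φ : G ≃g H) {a b x : V} :
    (∀ p : G.Walk a b, x ∈ p.support) ↔ ∀ q : H.Walk (φ a) (φ b), φ x ∈ q.support := by
  refine ⟨fun h q => ?_, fun h p => ?_⟩
  · have hx := h ((q.map φ.symm.toHom).copy (φ.symm_apply_apply a) (φ.symm_apply_apply b))
    rw [Walk.support_copy, Walk.support_map, List.mem_map] at hx
    obtain ⟨y, hy, rfl⟩ := hx
    simpa using hy
  · have hx := h (p.map φ.toHom)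
    rw [Walk.support_map] at hx
    exact (List.mem_map_of_injective φ.injective).mp hx

end SimpleGraph

namespace RTree

variable {E : Type}

/-- `Rlt` is the strict order of the lexicographic product `ℕ ×ₗ ℕ ×ₗ ℕ ×ₗ E ×ₗ ℕ`. -/
def lexKey (a : ℕ × ℕ × ℕ × E × ℕ) : ℕ ×ₗ ℕ ×ₗ ℕ ×ₗ E ×ₗ ℕ :=
  toLex (a.1, toLex (a.2.1, toLex (a.2.2.1, toLex a.2.2.2)))

theorem lexKey_injective : Function.Injective (lexKey (E := E)) := by
  rintro ⟨a₁, a₂, a₃, a₄, a₅⟩ ⟨b₁, b₂, b₃, b₄, b₅⟩ h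
  simp_all [lexKey]

variable [LinearOrder E]

theorem rlt_iff_lexKey_lt (a b : ℕ × ℕ × ℕ × E × ℕ) : Rlt a b ↔ lexKey a < lexKey b := by
  simp [Rlt, lexKey, Prod.Lex.lt_iff]

theorem rlt_irrefl (a : ℕ × ℕ × ℕ × E × ℕ) : ¬ Rlt a a := by
  simp [rlt_iff_lexKey_lt]

theorem rlt_trans {a b c : ℕ × ℕ × ℕ × E × ℕ} (h₁ : Rlt a b) (h₂ : Rlt b c) : Rlt a c := by
  rw [rlt_iff_lexKey_lt] at *
  exact h₁.trans h₂

theorem rlt_trichotomy (a b : ℕ × ℕ × ℕ × E × ℕ) : Rlt a b ∨ a = b ∨ Rlt b a := by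
  simp only [rlt_iff_lexKey_lt, ← lexKey_injective.eq_iff]
  exact lt_trichotomy _ _

mutual
theorem prec_irrefl : (t : RTree E) → ¬ Prec t t
  | node _ _ _, Prec.base h => rlt_irrefl _ h
  | node _ _ c, Prec.ofChildren _ h => precList_irrefl c h
termination_by t => sizeOf t

theorem precList_irrefl : (l : List (RTree E)) → ¬ PrecList l l
  | a :: _, PrecList.head h => prec_irrefl a h
  | _ :: l, PrecList.tail h => precList_irrefl l h
termination_by l => sizeOf l
end

mutual
theorem prec_trans : (t₁ t₂ t₃ : RTree E) → Prec t₁ t₂ → Prec t₂ t₃ → Prec t₁ t₃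
  | _, _, _, Prec.base h₁, Prec.base h₂ => Prec.base (rlt_trans h₁ h₂)
  | _, _, _, Prec.base h₁, Prec.ofChildren e₂ _ => Prec.base (e₂ ▸ h₁)
  | _, _, _, Prec.ofChildren e₁ _, Prec.base h₂ => Prec.base (e₁ ▸ h₂)
  | node _ _ c₁, node _ _ c₂, node _ _ c₃, Prec.ofChildren e₁ h₁, Prec.ofChildren e₂ h₂ =>
      Prec.ofChildren (e₁.trans e₂) (precList_trans c₁ c₂ c₃ h₁ h₂)
termination_by t₁ t₂ t₃ _ _ => sizeOf t₁ + sizeOf t₂ + sizeOf t₃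

theorem precList_trans : (l₁ l₂ l₃ : List (RTree E)) →
    PrecList l₁ l₂ → PrecList l₂ l₃ → PrecList l₁ l₃
  | _ :: _, _ :: _, _ :: _, PrecList.head h₁, PrecList.head h₂ =>
      PrecList.head (prec_trans _ _ _ h₁ h₂)
  | _ :: _, _ :: _, _ :: _, PrecList.head h₁, PrecList.tail _ => PrecList.head h₁
  | _ :: _, _ :: _, _ :: _, PrecList.tail _, PrecList.head h₂ => PrecList.head h₂
  | _ :: l₁, _ :: l₂, _ :: l₃, PrecList.tail h₁, PrecList.tail h₂ =>
      PrecList.tail (precList_trans l₁ l₂ l₃ h₁ h₂)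
termination_by l₁ l₂ l₃ _ _ => sizeOf l₁ + sizeOf l₂ + sizeOf l₃
end

mutual
theorem prec_trichotomy : (t₁ t₂ : RTree E) → Prec t₁ t₂ ∨ t₁ = t₂ ∨ Prec t₂ t₁
  | node l₁ i₁ c₁, node l₂ i₂ c₂ => by
    rcases rlt_trichotomy (R (node l₁ i₁ c₁)) (R (node l₂ i₂ c₂)) with h | h | h
    · exact Or.inl (Prec.base h)
    · obtain ⟨-, -, hc, rfl, rfl⟩ : _ ∧ _ ∧ c₁.length = c₂.length ∧ l₁ = l₂ ∧ i₁ = i₂ := by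
        simpa [R, children, elemLabel, inBond] using h
      -- `PrecList` only compares lists of equal length, which `R` guarantees.
      rcases precList_trichotomy c₁ c₂ hc with h' | rfl | h'
      · exact Or.inl (Prec.ofChildren h h')
      · exact Or.inr (Or.inl rfl)
      · exact Or.inr (Or.inr (Prec.ofChildren h.symm h'))
    · exact Or.inr (Or.inr (Prec.base h))
termination_by t₁ t₂ => sizeOf t₁ + sizeOf t₂
decreasing_by all_goals (simp; omega)

theorem precList_trichotomy : (l₁ l₂ : List (RTree E)) → l₁.length = l₂.length →
    PrecList l₁ l₂ ∨ l₁ = l₂ ∨ PrecList l₂ l₁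
  | [], [], _ => Or.inr (Or.inl rfl)
  | a :: l₁, b :: l₂, h => by
    rcases prec_trichotomy a b with h' | rfl | h'
    · exact Or.inl (PrecList.head h')
    · rcases precList_trichotomy l₁ l₂ (by simpa using h) with h'' | rfl | h''
      · exact Or.inl (PrecList.tail h'')
      · exact Or.inr (Or.inl rfl)
      · exact Or.inr (Or.inr (PrecList.tail h''))
    · exact Or.inr (Or.inr (PrecList.head h'))
termination_by l₁ l₂ _ => sizeOf l₁ + sizeOf l₂
decreasing_by all_goals (simp; omega)
end

end RTree

namespace RTree

variable {E : Type}

mutual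
/-- The preorder list of the nodes of `t`, each with its label, incoming bond and the
position of its parent, when `t` is placed at position `n` below a parent at position `p`. -/
def serialize : RTree E → ℕ → ℕ → List (E × ℕ × ℕ)
  | node l i cs, n, p => (l, i, p) :: serializeList cs (n + 1) n

def serializeList : List (RTree E) → ℕ → ℕ → List (E × ℕ × ℕ)
  | [], _, _ => []
  | t :: ts, n, p => serialize t n p ++ serializeList ts (n + t.size) p
end

theorem size_node (l : E) (i : ℕ) (c : List (RTree E)) :
    (node l i c).size = 1 + (c.map size).sum := by
  rw [size, List.attach_map_val]

mutual
theorem length_serialize : ∀ (t : RTree E) (n p : ℕ), (serialize t n p).length = t.size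
  | node l i cs, n, p => by
    rw [serialize, size_node, List.length_cons, length_serializeList cs (n + 1) n]
    omega

theorem length_serializeList : ∀ (ts : List (RTree E)) (n p : ℕ),
    (serializeList ts n p).length = (ts.map size).sum
  | [], _, _ => rfl
  | t :: ts, n, p => by
    rw [serializeList, List.length_append, length_serialize t n p,
      length_serializeList ts (n + t.size) p, List.map_cons, List.sum_cons]
end

end RTree

namespace MolGraph

variable {El : Type} {C : MolGraph El}

theorem root_le (v : Fin C.k) : C.root ≤ v :=
  Nat.zero_le v.val

theorem mem_childrenList {v c : Fin C.k} :
    c ∈ C.childrenList v ↔ C.toSimple.Adj v c ∧ v < c := by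
  simp [childrenList]

theorem pairwise_lt_childrenList (v : Fin C.k) : (C.childrenList v).Pairwise (· < ·) :=
  (Finset.sortedLT_sort _).pairwise

theorem toRTree_eq (v : Fin C.k) :
    C.toRTree v = RTree.node (C.label v) (C.inBondNat v) ((C.childrenList v).map C.toRTree) := by
  rw [toRTree, List.attach_map_val]

def permuteIso (G : MolGraph El) (σ : Equiv.Perm (Fin G.k)) :
    (G.permute σ).toSimple ≃g G.toSimple where
  toEquiv := σ
  map_rel_iff' {a b} := by
    show (σ a ≠ σ b ∧ 0 < G.bond s(σ a, σ b)) ↔ (a ≠ b ∧ 0 < G.bond (Sym2.map σ s(a, b)))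
    rw [Sym2.map_mk σ a b]
    exact and_congr_left' σ.injective.ne_iff

end MolGraph

namespace MolGraph.IsMolTree

variable {El : Type} {C : MolGraph El} (hC : C.IsMolTree)

noncomputable def key (v : Fin C.k) : List (Fin C.k) :=
  hC.1.key C.root v

theorem key_injective : Function.Injective hC.key :=
  hC.1.key_injective C.root

theorem descend_iff_key_prefix {v u : Fin C.k} : C.Descend v u ↔ hC.key v <+: hC.key u :=
  hC.1.forall_walk_mem_support_iff_prefix

theorem le_of_key_prefix {v u : Fin C.k} (h : hC.key v <+: hC.key u) : v ≤ u :=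
  hC.2.1 v u (hC.descend_iff_key_prefix.mpr h)

theorem key_of_adj_of_lt {v c : Fin C.k} (hadj : C.toSimple.Adj v c) (hlt : v < c) :
    hC.key c = hC.key v ++ [c] := by
  refine hC.1.key_of_adj_of_not_mem hadj fun hc => hlt.not_ge ?_
  exact hC.le_of_key_prefix (hC.1.mem_key_iff_prefix.mp hc)

/-- The parent of `v ≠ C.root`, and `C.root` itself for the root. -/
noncomputable def parent (v : Fin C.k) : Fin C.k :=
  (hC.1.path C.root v).penultimate

theorem parent_root : hC.parent C.root = C.root := by
  rw [parent, ← hC.1.eq_path SimpleGraph.Walk.IsPath.nil]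
  rfl

theorem adj_parent {v : Fin C.k} (hv : v ≠ C.root) : C.toSimple.Adj (hC.parent v) v :=
  SimpleGraph.Walk.adj_penultimate (SimpleGraph.Walk.not_nil_of_ne hv.symm)

theorem key_eq_key_parent_append {v : Fin C.k} (hv : v ≠ C.root) :
    hC.key v = hC.key (hC.parent v) ++ [v] :=
  hC.1.key_eq_key_penultimate_append hv

theorem parent_lt {v : Fin C.k} (hv : v ≠ C.root) : hC.parent v < v := by
  refine (hC.le_of_key_prefix ?_).lt_of_ne (hC.adj_parent hv).ne
  rw [hC.key_eq_key_parent_append hv]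
  exact List.prefix_append _ _

theorem eq_parent_of_adj_of_lt {u v : Fin C.k} (hadj : C.toSimple.Adj u v) (hlt : u < v) :
    u = hC.parent v := by
  have hv : v ≠ C.root := fun h => (h ▸ hlt).not_ge (root_le u)
  have h := (hC.key_of_adj_of_lt hadj hlt).symm.trans (hC.key_eq_key_parent_append hv)
  exact hC.key_injective (List.append_cancel_right h)

theorem inBondNat_eq_bond_parent {v : Fin C.k} (hv : v ≠ C.root) :
    C.inBondNat v = C.bond s(v, hC.parent v) := by
  have hparents : Finset.univ.filter (fun w => C.toSimple.Adj v w ∧ w < v) = {hC.parent v} := by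
    ext w
    simp only [Finset.mem_filter, Finset.mem_univ, true_and, Finset.mem_singleton]
    refine ⟨fun ⟨hadj, hlt⟩ => hC.eq_parent_of_adj_of_lt hadj.symm hlt, ?_⟩
    rintro rfl
    exact ⟨(hC.adj_parent hv).symm, hC.parent_lt hv⟩
  rw [inBondNat, hparents, Finset.sum_singleton]

noncomputable def subtree (v : Fin C.k) : Finset (Fin C.k) :=
  Finset.univ.filter fun u => hC.key v <+: hC.key u

theorem mem_subtree {v u : Fin C.k} : u ∈ hC.subtree v ↔ hC.key v <+: hC.key u := by
  simp [subtree]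

theorem self_mem_subtree (v : Fin C.k) : v ∈ hC.subtree v :=
  hC.mem_subtree.mpr (List.prefix_refl _)

theorem le_of_mem_subtree {v u : Fin C.k} (h : u ∈ hC.subtree v) : v ≤ u :=
  hC.le_of_key_prefix (hC.mem_subtree.mp h)

theorem mem_subtree_of_le_of_le {v u w : Fin C.k} (hu : u ∈ hC.subtree v) (hvw : v ≤ w)
    (hwu : w ≤ u) : w ∈ hC.subtree v := by
  simp only [mem_subtree, ← descend_iff_key_prefix] at hu ⊢
  exact hC.2.2 v u w hu hvw hwu

theorem exists_subtree_eq_Icc (v : Fin C.k) : ∃ m, hC.subtree v = Finset.Icc v m := by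
  have hne : (hC.subtree v).Nonempty := ⟨v, hC.self_mem_subtree v⟩
  refine ⟨(hC.subtree v).max' hne, Finset.ext fun u => ⟨fun hu => ?_, fun hu => ?_⟩⟩
  · exact Finset.mem_Icc.mpr ⟨hC.le_of_mem_subtree hu, Finset.le_max' _ u hu⟩
  · obtain ⟨hvu, hum⟩ := Finset.mem_Icc.mp hu
    exact hC.mem_subtree_of_le_of_le (Finset.max'_mem _ hne) hvu hum

theorem subtree_root : hC.subtree C.root = Finset.univ :=
  Finset.eq_univ_of_forall fun u =>
    hC.mem_subtree.mpr (hC.1.key_root_prefix _ u)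

theorem key_prefix_of_mem_childrenList {v c : Fin C.k} (hc : c ∈ C.childrenList v) :
    hC.key v <+: hC.key c := by
  obtain ⟨hadj, hlt⟩ := mem_childrenList.mp hc
  rw [hC.key_of_adj_of_lt hadj hlt]
  exact List.prefix_append _ _

theorem subtree_subset_of_mem_childrenList {v c : Fin C.k} (hc : c ∈ C.childrenList v) :
    hC.subtree c ⊆ hC.subtree v := fun _ hu =>
  hC.mem_subtree.mpr ((hC.key_prefix_of_mem_childrenList hc).trans (hC.mem_subtree.mp hu))

theorem lt_of_mem_subtree_of_mem_childrenList {v c u : Fin C.k} (hc : c ∈ C.childrenList v)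
    (hu : u ∈ hC.subtree c) : v < u :=
  (mem_childrenList.mp hc).2.trans_le (hC.le_of_mem_subtree hu)

theorem mem_subtree_iff {v u : Fin C.k} :
    u ∈ hC.subtree v ↔ u = v ∨ ∃ c ∈ C.childrenList v, u ∈ hC.subtree c := by
  refine ⟨fun hu => or_iff_not_imp_left.mpr fun hne => ?_, ?_⟩
  · obtain ⟨c, hadj, hc, hcu⟩ :=
      hC.1.exists_adj_prefix_of_prefix (hC.mem_subtree.mp hu) (Ne.symm hne)
    have hlt : v < c := by
      refine (hC.le_of_key_prefix ?_).lt_of_ne hadj.ne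
      exact ⟨[c], hc.symm⟩
    exact ⟨c, mem_childrenList.mpr ⟨hadj, hlt⟩, hC.mem_subtree.mpr hcu⟩
  · rintro (rfl | ⟨c, hc, hu⟩)
    · exact hC.self_mem_subtree u
    · exact hC.subtree_subset_of_mem_childrenList hc hu

theorem disjoint_subtree {v c c' : Fin C.k} (hc : c ∈ C.childrenList v)
    (hc' : c' ∈ C.childrenList v) (hne : c ≠ c') :
    Disjoint (hC.subtree c) (hC.subtree c') := by
  refine Finset.disjoint_left.mpr fun u hu hu' => hne (hC.key_injective ?_)
  obtain ⟨hadj, hlt⟩ := mem_childrenList.mp hc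
  obtain ⟨hadj', hlt'⟩ := mem_childrenList.mp hc'
  have hlen : (hC.key c).length = (hC.key c').length := by
    simp [hC.key_of_adj_of_lt hadj hlt, hC.key_of_adj_of_lt hadj' hlt']
  exact (List.prefix_of_prefix_length_le (hC.mem_subtree.mp hu) (hC.mem_subtree.mp hu')
    hlen.le).eq_of_length hlen

theorem lt_of_mem_subtree_of_lt {v c c' x y : Fin C.k} (hc : c ∈ C.childrenList v)
    (hc' : c' ∈ C.childrenList v) (hcc' : c < c') (hx : x ∈ hC.subtree c)
    (hy : y ∈ hC.subtree c') : x < y := by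
  by_contra! hyx
  have hc'c : c' ∈ hC.subtree c :=
    hC.mem_subtree_of_le_of_le hx hcc'.le ((hC.le_of_mem_subtree hy).trans hyx)
  exact Finset.disjoint_left.mp (hC.disjoint_subtree hc hc' hcc'.ne) hc'c
    (hC.self_mem_subtree c')

noncomputable def subtreeList (v : Fin C.k) : List (Fin C.k) :=
  (hC.subtree v).sort (· ≤ ·)

theorem mem_subtreeList {v u : Fin C.k} : u ∈ hC.subtreeList v ↔ u ∈ hC.subtree v :=
  Finset.mem_sort _

theorem map_val_subtreeList (v : Fin C.k) :
    (hC.subtreeList v).map Fin.val = List.range' v (hC.subtreeList v).length := by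
  obtain ⟨m, hm⟩ := hC.exists_subtree_eq_Icc v
  rw [subtreeList, Finset.length_sort, hm, Fin.map_val_sort_Icc, Fin.card_Icc]

theorem subtreeList_eq_cons (v : Fin C.k) :
    hC.subtreeList v = v :: ((C.childrenList v).map hC.subtreeList).flatten := by
  refine List.Pairwise.eq_of_mem_iff (r := (· < ·)) (Finset.sortedLT_sort _).pairwise ?_
    fun u => ?_
  · simp only [List.pairwise_cons, List.pairwise_flatten, List.mem_flatten, List.mem_map,
      List.pairwise_map]
    refine ⟨?_, ?_, ?_⟩
    · rintro u ⟨_, ⟨c, hc, rfl⟩, hu⟩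
      exact hC.lt_of_mem_subtree_of_mem_childrenList hc (hC.mem_subtreeList.mp hu)
    · rintro _ ⟨c, -, rfl⟩
      exact (Finset.sortedLT_sort _).pairwise
    · refine (pairwise_lt_childrenList v).imp_of_mem fun hc hc' hlt x hx y hy => ?_
      exact hC.lt_of_mem_subtree_of_lt hc hc' hlt (hC.mem_subtreeList.mp hx)
        (hC.mem_subtreeList.mp hy)
  · rw [mem_subtreeList, mem_subtree_iff]
    simp only [List.mem_cons, List.mem_flatten, List.mem_map]
    constructor
    · rintro (rfl | ⟨c, hc, hu⟩)
      · exact Or.inl rfl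
      · exact Or.inr ⟨_, ⟨c, hc, rfl⟩, hC.mem_subtreeList.mpr hu⟩
    · rintro (rfl | ⟨_, ⟨c, hc, rfl⟩, hu⟩)
      · exact Or.inl rfl
      · exact Or.inr ⟨c, hc, hC.mem_subtreeList.mp hu⟩

noncomputable def nodeData (u : Fin C.k) : El × ℕ × ℕ :=
  (C.label u, C.inBondNat u, (hC.parent u).val)

theorem serializeList_map_toRTree (v : Fin C.k) (cs : List (Fin C.k))
    (hcs : ∀ c ∈ cs, (C.toRTree c).serialize c v = (hC.subtreeList c).map hC.nodeData)
    (n : ℕ) (hpos : (cs.map hC.subtreeList).flatten.map Fin.val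
      = List.range' n (cs.map hC.subtreeList).flatten.length) :
    RTree.serializeList (cs.map C.toRTree) n v
      = (cs.map hC.subtreeList).flatten.map hC.nodeData := by
  induction cs generalizing n with
  | nil => rfl
  | cons c cs ih =>
    simp only [List.map_cons, List.flatten_cons, List.map_append, List.length_append,
      ← List.range'_append_1] at hpos ⊢
    obtain ⟨hposc, hposcs⟩ := List.append_inj hpos (by simp)
    have hcn : c.val = n := by
      rw [hC.map_val_subtreeList c, List.range'_inj] at hposc
      exact hposc.2.resolve_left
        (List.length_pos_of_mem (hC.mem_subtreeList.mpr (hC.self_mem_subtree c))).ne'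
    have hsize : (C.toRTree c).size = (hC.subtreeList c).length := by
      rw [← RTree.length_serialize _ c v, hcs c List.mem_cons_self, List.length_map]
    rw [RTree.serializeList, ← hcn, hcs c List.mem_cons_self, hsize, hcn,
      ih (fun c' hc' => hcs c' (List.mem_cons_of_mem _ hc')) _ hposcs]

theorem serialize_toRTree (v : Fin C.k) :
    (C.toRTree v).serialize v (hC.parent v) = (hC.subtreeList v).map hC.nodeData := by
  have hpos := hC.map_val_subtreeList v
  rw [hC.subtreeList_eq_cons v, List.map_cons, List.length_cons, List.range'_succ] at hpos
  rw [toRTree_eq, RTree.serialize, hC.subtreeList_eq_cons v, List.map_cons]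
  refine congrArg _
    (hC.serializeList_map_toRTree v _ (fun c hc => ?_) _ ((List.cons_inj_right _).mp hpos))
  obtain ⟨hadj, hlt⟩ := mem_childrenList.mp hc
  rw [hC.eq_parent_of_adj_of_lt hadj hlt]
  exact serialize_toRTree c
termination_by C.k - v.val
decreasing_by
  have : c.val < C.k := c.isLt
  omega

theorem serialize_toRTree_root :
    (C.toRTree C.root).serialize 0 0 = (List.finRange C.k).map hC.nodeData := by
  have h := hC.serialize_toRTree C.root
  rwa [parent_root, subtreeList, subtree_root, Fin.sort_univ] at h

theorem bond_eq_ite {a b : Fin C.k} (hab : a < b) :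
    C.bond s(a, b) = if a = hC.parent b then C.inBondNat b else 0 := by
  have hb : b ≠ C.root := fun h => (h ▸ hab).not_ge (root_le a)
  split_ifs with h
  · rw [hC.inBondNat_eq_bond_parent hb, ← h, Sym2.eq_swap]
  · have hnadj : ¬ C.toSimple.Adj a b := fun hadj => h (hC.eq_parent_of_adj_of_lt hadj hab)
    simpa [toSimple, hab.ne] using hnadj

theorem eq_of_toRTree_root_eq {C₁ C₂ : MolGraph El} (h₁ : C₁.IsMolTree) (h₂ : C₂.IsMolTree)
    (h : C₁.toRTree C₁.root = C₂.toRTree C₂.root) : C₁ = C₂ := by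
  have hdata := h₁.serialize_toRTree_root
  rw [h, h₂.serialize_toRTree_root] at hdata
  obtain ⟨k, _, b₁, hb₁, l₁⟩ := C₁
  obtain ⟨k₂, _, b₂, hb₂, l₂⟩ := C₂
  obtain rfl : k = k₂ := by simpa using (congrArg List.length hdata).symm
  rw [List.map_inj_left] at hdata
  simp only [List.mem_finRange, nodeData, Prod.mk.injEq, forall_const] at hdata
  have hbond (a b : Fin k) (hab : a < b) : b₁ s(a, b) = b₂ s(a, b) := by
    rw [show b₁ s(a, b) = _ from h₁.bond_eq_ite hab, show b₂ s(a, b) = _ from h₂.bond_eq_ite hab,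
      Fin.val_injective (hdata b).2.2, (hdata b).2.1]
  obtain rfl : l₁ = l₂ := funext fun u => (hdata u).1.symm
  obtain rfl : b₁ = b₂ := by
    funext e
    induction e using Sym2.ind with | _ a b => ?_
    rcases lt_trichotomy a b with hab | rfl | hab
    · exact hbond a b hab
    · rw [hb₁, hb₂]
    · rw [Sym2.eq_swap, hbond b a hab, Sym2.eq_swap]
  rfl

end MolGraph.IsMolTree

namespace MolGraph

variable {El : Type}

/-- Numbering the vertices of a tree in the lexicographic order of their paths from `c` is a
depth-first numbering from `c`. -/
theorem exists_permute_isMolTree {G : MolGraph El} (hT : G.toSimple.IsTree) (c : Fin G.k) :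
    ∃ σ : Equiv.Perm (Fin G.k), (G.permute σ).IsMolTree ∧ σ G.root = c := by
  obtain ⟨σ, hσ⟩ := exists_equiv_fin_strictMono_comp (hT.key_injective c) (Fintype.card_fin _)
  have hroot : σ G.root = c := by
    refine hT.key_injective c (le_antisymm ?_ (not_lt.mp (hT.key_root_prefix c _).le))
    simpa using hσ.monotone (root_le (σ.symm c))
  have hdesc (v u : Fin G.k) :
      (G.permute σ).Descend v u ↔ hT.key c (σ v) <+: hT.key c (σ u) := by
    rw [← hT.forall_walk_mem_support_iff_prefix, ← hroot]
    exact (G.permuteIso σ).forall_walk_mem_support_iff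
  refine ⟨σ, ⟨(G.permuteIso σ).isTree_iff.mpr hT, fun v u hd => ?_, fun v u w hd hvw hwu => ?_⟩,
    hroot⟩
  · exact hσ.le_iff_le.mp (not_lt.mp ((hdesc v u).mp hd).le)
  · exact (hdesc v w).mpr (((hdesc v u).mp hd).of_le_of_le (hσ.monotone hvw) (hσ.monotone hwu))

end MolGraph

/-- Definition 4 of the paper is well formed: for every molecular tree `G`, among the
molecular trees obtained from `G` by a permutation of vertices whose root (vertex `1`)
is central in `G`, there exists exactly one `≺`-largest element — the canonical
molecular tree of `G`. -/
theorem canonical_molecular_tree_exists_unique {El : Type} [LinearOrder El]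
    (G : MolGraph El) (hG : G.IsMolTree) :
    ∃! C : MolGraph El,
      ((∃ σ : Equiv.Perm (Fin G.k),
          C = G.permute σ ∧ C.IsMolTree ∧ IsCentral G.toSimple (σ G.root)) ∧
        ∀ C' : MolGraph El,
          (∃ σ : Equiv.Perm (Fin G.k),
            C' = G.permute σ ∧ C'.IsMolTree ∧ IsCentral G.toSimple (σ G.root)) →
          C' ≠ C → PrecT C' C) := by
  let S : Set (MolGraph El) := {C | ∃ σ : Equiv.Perm (Fin G.k),
    C = G.permute σ ∧ C.IsMolTree ∧ IsCentral G.toSimple (σ G.root)}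
  show ∃! C, C ∈ S ∧ ∀ C' ∈ S, C' ≠ C → PrecT C' C
  have : Nonempty (Fin G.k) := ⟨G.root⟩
  obtain ⟨c, hc⟩ := G.toSimple.exists_isCentral
  obtain ⟨σ, hσ, rfl⟩ := exists_permute_isMolTree hG.1 c
  refine Set.Finite.existsUnique_greatest_of_total (s := S)
    ((Set.finite_range G.permute).subset ?_) ⟨_, σ, rfl, hσ, hc⟩
    (fun _ => RTree.prec_irrefl _) (RTree.prec_trans _ _ _) ?_
  · rintro _ ⟨σ, rfl, -⟩
    exact ⟨σ, rfl⟩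
  · rintro _ ⟨σ₁, rfl, h₁, -⟩ _ ⟨σ₂, rfl, h₂, -⟩ hne
    rcases RTree.prec_trichotomy ((G.permute σ₁).toRTree (G.permute σ₁).root)
      ((G.permute σ₂).toRTree (G.permute σ₂).root) with h | h | h
    · exact Or.inl h
    · exact absurd (h₁.eq_of_toRTree_root_eq h₂ h) hne
    · exact Or.inr h
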